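/- arXiv:1609.08281 — 3 statements merged into one kernel-verified Lean document; each statement's English description precedes it below -/
import Mathlib

section
/- For an M×L real matrix D̄ whose columns have unit ℓ₂ norm, with Gram matrix G = D̄ᵀD̄ and L > M, the mutual coherence μ(D̄) = max_{i≠j} |G(i,j)| satisfies μ(D̄) ≥ sqrt((L−M)/(M(L−1))) (the Welch bound). -/
open Matrix

/-- The mutual coherence of a matrix: the maximum absolute value of the off-diagonal
entries of its Gram matrix `DᵀD`. -/
noncomputable def mutualCoherence {M L : ℕ} (D : Matrix (Fin M) (Fin L) ℝ) : ℝ :=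
  ⨆ p : Fin L × Fin L, if p.1 ≠ p.2 then |(Dᵀ * D) p.1 p.2| else 0

theorem welch_bound {M L : ℕ} (hM : 1 ≤ M) (hL : M < L)
    (D : Matrix (Fin M) (Fin L) ℝ)
    (hcols : ∀ j, ∑ i, (D i j) ^ 2 = 1) :
    Real.sqrt (((L : ℝ) - M) / (M * ((L : ℝ) - 1))) ≤ mutualCoherence D := by
  have hLpos : 0 < L := lt_of_le_of_lt (Nat.zero_le M) hL
  haveI : NeZero L := ⟨hLpos.ne'⟩
  set G : Matrix (Fin L) (Fin L) ℝ := Dᵀ * D with hG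
  set A : Matrix (Fin M) (Fin M) ℝ := D * Dᵀ with hA
  set μ := mutualCoherence D with hμ
  have hbdd : BddAbove (Set.range fun p : Fin L × Fin L =>
      if p.1 ≠ p.2 then |G p.1 p.2| else 0) := (Set.finite_range _).bddAbove
  have hμ0 : 0 ≤ μ := by
    rw [hμ]; unfold mutualCoherence
    exact le_trans (by simp) (le_ciSup hbdd ((0 : Fin L), (0 : Fin L)))
  have hμge : ∀ p q : Fin L, p ≠ q → |G p q| ≤ μ := by
    intro p q h
    rw [hμ]; unfold mutualCoherence
    refine le_trans ?_ (le_ciSup hbdd (p, q))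
    simp [h, hG]
  have hGdiag : ∀ p, G p p = 1 := by
    intro p
    have := hcols p
    simpa [hG, Matrix.mul_apply, Matrix.transpose_apply, sq] using this
  -- trace of A
  have htrA : A.trace = (L : ℝ) := by
    have h1 : A.trace = ∑ i, ∑ p, (D i p) ^ 2 := by
      simp [hA, Matrix.trace, Matrix.diag, Matrix.mul_apply, sq]
    rw [h1, Finset.sum_comm]
    simp [hcols]
  -- trace (G*G) = trace (A*A)
  have htr : (G * G).trace = (A * A).trace := by
    have h1 : G * G = Dᵀ * (D * (Dᵀ * D)) := by
      simp [hG, Matrix.mul_assoc]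
    have h2 : (D * (Dᵀ * D)) * Dᵀ = A * A := by
      simp [hA, Matrix.mul_assoc]
    rw [h1, Matrix.trace_mul_comm, h2]
  have hsumG : ∑ p, ∑ q, (G p q) ^ 2 = (G * G).trace := by
    have hGsym : ∀ p q, G q p = G p q := by
      intro p q
      simp [hG, Matrix.mul_apply, Matrix.transpose_apply, mul_comm]
    simp only [Matrix.trace, Matrix.diag, Matrix.mul_apply]
    refine Finset.sum_congr rfl fun p _ => Finset.sum_congr rfl fun q _ => ?_
    rw [hGsym p q, sq]
  have hsumA : (A * A).trace = ∑ i, ∑ j, (A i j) ^ 2 := by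
    have hAsym : ∀ i j, A j i = A i j := by
      intro i j
      simp [hA, Matrix.mul_apply, Matrix.transpose_apply, mul_comm]
    simp only [Matrix.trace, Matrix.diag, Matrix.mul_apply]
    refine Finset.sum_congr rfl fun i _ => Finset.sum_congr rfl fun j _ => ?_
    rw [hAsym i j, sq]
  -- Cauchy-Schwarz: L^2 ≤ M * ∑∑ (A i j)^2
  have hCS : ((L : ℝ)) ^ 2 ≤ (M : ℝ) * ∑ i, ∑ j, (A i j) ^ 2 := by
    have h1 : (∑ i, A i i * 1) ^ 2 ≤ (∑ i : Fin M, (A i i) ^ 2) * ∑ i : Fin M, (1 : ℝ) ^ 2 :=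
      Finset.sum_mul_sq_le_sq_mul_sq _ _ _
    have h2 : ∑ i : Fin M, (A i i) ^ 2 ≤ ∑ i, ∑ j, (A i j) ^ 2 := by
      refine Finset.sum_le_sum fun i _ => ?_
      exact Finset.single_le_sum (f := fun j => (A i j) ^ 2) (fun j _ => sq_nonneg _) (Finset.mem_univ i)
    have h3 : A.trace = ∑ i, A i i * 1 := by simp [Matrix.trace, Matrix.diag]
    calc ((L : ℝ)) ^ 2 = (A.trace) ^ 2 := by rw [htrA]
      _ = (∑ i, A i i * 1) ^ 2 := by rw [h3]
      _ ≤ (∑ i : Fin M, (A i i) ^ 2) * ∑ i : Fin M, (1 : ℝ) ^ 2 := h1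
      _ = (M : ℝ) * ∑ i : Fin M, (A i i) ^ 2 := by
          simp [mul_comm]
      _ ≤ (M : ℝ) * ∑ i, ∑ j, (A i j) ^ 2 := by
          exact mul_le_mul_of_nonneg_left h2 (Nat.cast_nonneg M)
  -- row bound
  have hrow : ∀ p, ∑ q, (G p q) ^ 2 ≤ 1 + ((L : ℝ) - 1) * μ ^ 2 := by
    intro p
    rw [← Finset.sum_erase_add _ _ (Finset.mem_univ p), hGdiag p]
    have h1 : ∑ q ∈ Finset.univ.erase p, (G p q) ^ 2
        ≤ ∑ _q ∈ Finset.univ.erase p, μ ^ 2 := by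
      refine Finset.sum_le_sum fun q hq => ?_
      have hne : p ≠ q := (Finset.ne_of_mem_erase hq).symm
      calc (G p q) ^ 2 = |G p q| ^ 2 := (sq_abs _).symm
        _ ≤ μ ^ 2 := pow_le_pow_left₀ (abs_nonneg _) (hμge p q hne) 2
    have h2 : ∑ _q ∈ Finset.univ.erase p, μ ^ 2 = ((L : ℝ) - 1) * μ ^ 2 := by
      rw [Finset.sum_const, Finset.card_erase_of_mem (Finset.mem_univ p),
        Finset.card_univ, Fintype.card_fin, nsmul_eq_mul, Nat.cast_sub hLpos]
      push_cast
      ring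
    have := le_trans h1 (le_of_eq h2)
    nlinarith [this]
  have htotal : ∑ p, ∑ q, (G p q) ^ 2 ≤ (L : ℝ) * (1 + ((L : ℝ) - 1) * μ ^ 2) := by
    calc ∑ p, ∑ q, (G p q) ^ 2 ≤ ∑ _p : Fin L, (1 + ((L : ℝ) - 1) * μ ^ 2) :=
          Finset.sum_le_sum fun p _ => hrow p
      _ = (L : ℝ) * (1 + ((L : ℝ) - 1) * μ ^ 2) := by
          rw [Finset.sum_const, Finset.card_univ, Fintype.card_fin, nsmul_eq_mul]
  have key : ((L : ℝ)) ^ 2 ≤ (M : ℝ) * ((L : ℝ) * (1 + ((L : ℝ) - 1) * μ ^ 2)) := by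
    have h := hCS
    rw [← hsumA, ← htr, ← hsumG] at h
    exact le_trans h (mul_le_mul_of_nonneg_left htotal (Nat.cast_nonneg M))
  -- final arithmetic
  have hm1 : (1 : ℝ) ≤ (M : ℝ) := by exact_mod_cast hM
  have hml : (M : ℝ) < (L : ℝ) := by exact_mod_cast hL
  have hLm1 : (0 : ℝ) < (L : ℝ) - 1 := by linarith
  have hMpos : (0 : ℝ) < (M : ℝ) := by linarith
  have hLpos' : (0 : ℝ) < (L : ℝ) := by linarith
  have hsq : ((L : ℝ) - M) / ((M : ℝ) * ((L : ℝ) - 1)) ≤ μ ^ 2 := by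
    rw [div_le_iff₀ (by positivity)]
    nlinarith [key, hLpos', hMpos, hLm1]
  calc Real.sqrt (((L : ℝ) - M) / ((M : ℝ) * ((L : ℝ) - 1)))
      ≤ Real.sqrt (μ ^ 2) := Real.sqrt_le_sqrt hsq
    _ = μ := by rw [Real.sqrt_sq hμ0]
end

section
/- Let D ∈ ℝ^{M×L} have unit-norm columns with mutual coherence μ(D), and suppose θ ∈ ℝ^L satisfies ‖θ‖₀ = K with K < (1 + 1/μ(D))/2. Then θ is the unique solution of the system Dθ' = Dθ among all vectors θ' with ‖θ'‖₀ ≤ K. -/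
open Matrix

/-- The ℓ₀ "norm" of a vector: the number of nonzero entries. -/
noncomputable def l0norm {L : ℕ} (θ : Fin L → ℝ) : ℕ :=
  (Finset.univ.filter fun i => θ i ≠ 0).card

theorem sparse_uniqueness_of_coherence {M L K : ℕ}
    (D : Matrix (Fin M) (Fin L) ℝ)
    (hcols : ∀ j, ∑ i, (D i j) ^ 2 = 1)
    (θ : Fin L → ℝ) (hθ : l0norm θ = K)
    (hK : (K : ℝ) < (1 + 1 / mutualCoherence D) / 2) :
    ∀ θ' : Fin L → ℝ, l0norm θ' ≤ K → D.mulVec θ' = D.mulVec θ → θ' = θ := by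
  intro θ' hθ' heq
  set μ := mutualCoherence D with hμdef
  rcases le_or_gt μ 0 with hμ | hμ
  · -- then 1/μ ≤ 0, so K < 1/2, hence K = 0 and both vectors are zero
    have h1 : (1 : ℝ) / μ ≤ 0 := by
      rcases eq_or_lt_of_le hμ with h | h
      · rw [h]; norm_num
      · exact le_of_lt (div_neg_of_pos_of_neg one_pos h)
    have hK0 : K = 0 := by
      by_contra h
      have : (1 : ℝ) ≤ (K : ℝ) := by exact_mod_cast Nat.one_le_iff_ne_zero.mpr h
      linarith
    subst hK0
    have hz : ∀ (v : Fin L → ℝ), l0norm v = 0 → v = 0 := by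
      intro v hv
      funext j
      simp only [Pi.zero_apply]
      by_contra h
      have : j ∈ Finset.univ.filter fun i => v i ≠ 0 := by simp [h]
      have := Finset.card_pos.mpr ⟨j, this⟩
      rw [l0norm] at hv; omega
    rw [hz θ' (Nat.le_zero.mp hθ'), hz θ hθ]
  · -- main case μ > 0
    have hbdd : ∀ i j : Fin L, i ≠ j → |(Dᵀ * D) i j| ≤ μ := by
      intro i j hij
      rw [hμdef, mutualCoherence]
      have h := le_ciSup (Set.Finite.bddAbove (Set.finite_range
        (fun p : Fin L × Fin L => if p.1 ≠ p.2 then |(Dᵀ * D) p.1 p.2| else 0)))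
        (⟨i, j⟩ : Fin L × Fin L)
      simpa [hij] using h
    by_contra hne
    set x : Fin L → ℝ := θ' - θ with hxdef
    have hx : x ≠ 0 := sub_ne_zero.mpr hne
    have hDx : (Dᵀ * D).mulVec x = 0 := by
      rw [← mulVec_mulVec, hxdef, mulVec_sub, heq, sub_self, mulVec_zero]
    set S : Finset (Fin L) := Finset.univ.filter (fun i => x i ≠ 0) with hSdef
    have hScard : (S.card : ℝ) ≤ 2 * K := by
      have hsub : S ⊆ (Finset.univ.filter fun i => θ' i ≠ 0) ∪
          (Finset.univ.filter fun i => θ i ≠ 0) := by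
        intro j hj
        simp only [hSdef, Finset.mem_filter, Finset.mem_univ, true_and] at hj
        simp only [Finset.mem_union, Finset.mem_filter, Finset.mem_univ, true_and]
        by_contra h
        push_neg at h
        apply hj
        simp [hxdef, h.1, h.2]
      have := (Finset.card_le_card hsub).trans (Finset.card_union_le _ _)
      rw [l0norm] at hθ' hθ
      have : S.card ≤ 2 * K := by omega
      exact_mod_cast this
    -- pick index with maximal |x i|
    obtain ⟨i0, hi0ne⟩ : ∃ i, x i ≠ 0 := by
      by_contra h; push_neg at h; exact hx (funext h)
    obtain ⟨i, _, himax⟩ := Finset.exists_max_image Finset.univ (fun j => |x j|)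
      ⟨i0, Finset.mem_univ i0⟩
    have hipos : 0 < |x i| := lt_of_lt_of_le (abs_pos.mpr hi0ne) (himax i0 (Finset.mem_univ i0))
    have hiS : i ∈ S := by
      simp [hSdef, abs_pos.mp hipos]
    -- Gram diagonal is 1
    have hdiag : (Dᵀ * D) i i = 1 := by
      rw [Matrix.mul_apply]
      simpa [sq] using hcols i
    -- the i-th row of the Gram equation
    have hrow : ∑ j, (Dᵀ * D) i j * x j = 0 := by
      have := congrFun hDx i
      simpa [Matrix.mulVec, dotProduct] using this
    have hsplit : x i = -∑ j ∈ Finset.univ.erase i, (Dᵀ * D) i j * x j := by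
      have hsum0 : (Dᵀ * D) i i * x i +
          ∑ j ∈ Finset.univ.erase i, (Dᵀ * D) i j * x j = 0 := by
        rw [Finset.add_sum_erase Finset.univ (fun j => (Dᵀ * D) i j * x j)
          (Finset.mem_univ i)]
        exact hrow
      rw [hdiag, one_mul] at hsum0
      linarith
    -- bound
    have habs : |x i| ≤ ∑ j ∈ S.erase i, |(Dᵀ * D) i j * x j| := by
      rw [hsplit, abs_neg]
      refine (Finset.abs_sum_le_sum_abs _ _).trans (le_of_eq ?_)
      symm
      apply Finset.sum_subset
      · exact Finset.erase_subset_erase _ (Finset.subset_univ S)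
      · intro j hj hjS
        have hji : j ≠ i := Finset.ne_of_mem_erase hj
        have hxj : x j = 0 := by
          by_contra h
          exact hjS (Finset.mem_erase.mpr ⟨hji, by simp [hSdef, h]⟩)
        simp [hxj]
    have hterm : ∀ j ∈ S.erase i, |(Dᵀ * D) i j * x j| ≤ μ * |x i| := by
      intro j hj
      have hji : j ≠ i := Finset.ne_of_mem_erase hj
      rw [abs_mul]
      exact mul_le_mul (hbdd i j (Ne.symm hji)) (himax j (Finset.mem_univ j))
        (abs_nonneg _) (le_trans (abs_nonneg _) (hbdd i j (Ne.symm hji)))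
    have hsum : ∑ j ∈ S.erase i, |(Dᵀ * D) i j * x j| ≤ (S.erase i).card * (μ * |x i|) := by
      simpa using Finset.sum_le_card_nsmul (S.erase i) _ (μ * |x i|) hterm
    have hcardE : ((S.erase i).card : ℝ) ≤ 2 * K - 1 := by
      rw [Finset.card_erase_of_mem hiS]
      have h1 : 1 ≤ S.card := Finset.card_pos.mpr ⟨i, hiS⟩
      have : ((S.card - 1 : ℕ) : ℝ) = (S.card : ℝ) - 1 := by
        rw [Nat.cast_sub h1]; simp
      rw [this]
      linarith
    have hmain : μ * (2 * K - 1) < 1 := by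
      have h2 : 2 * (K : ℝ) - 1 < 1 / μ := by linarith
      nlinarith [mul_pos hμ (show (0:ℝ) < 1/μ by positivity), mul_one_div_cancel (ne_of_gt hμ)]
    have hcnonneg : (0 : ℝ) ≤ ((S.erase i).card : ℝ) := Nat.cast_nonneg _
    nlinarith [mul_le_mul_of_nonneg_right hcardE (show (0:ℝ) ≤ μ * |x i| by positivity)]
end

section
/- Let D ∈ ℝ^{M×L} have unit-norm columns with mutual coherence μ. If K − 1 < 1/μ, then any K distinct columns of D are linearly independent. -/
open Matrix

lemma coherence_bound {M L : ℕ} (D : Matrix (Fin M) (Fin L) ℝ) {i j : Fin L} (h : i ≠ j) :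
    |∑ m, D m i * D m j| ≤ mutualCoherence D := by
  have := le_ciSup (f := fun p : Fin L × Fin L => if p.1 ≠ p.2 then |(Dᵀ * D) p.1 p.2| else 0)
    (Set.Finite.bddAbove (Set.finite_range _)) (i, j)
  simpa [mutualCoherence, h, Matrix.mul_apply, Matrix.transpose_apply] using this

lemma coherence_nonneg {M L : ℕ} (D : Matrix (Fin M) (Fin L) ℝ) (i : Fin L) :
    0 ≤ mutualCoherence D := by
  have := le_ciSup (f := fun p : Fin L × Fin L => if p.1 ≠ p.2 then |(Dᵀ * D) p.1 p.2| else 0)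
    (Set.Finite.bddAbove (Set.finite_range _)) (i, i)
  simpa [mutualCoherence] using this

theorem linearIndependent_cols_of_coherence {M L K : ℕ}
    (D : Matrix (Fin M) (Fin L) ℝ)
    (hcols : ∀ j, ∑ i, (D i j) ^ 2 = 1)
    (hK : ((K : ℝ) - 1) * mutualCoherence D < 1)
    (S : Finset (Fin L)) (hS : S.card = K) :
    LinearIndependent ℝ (fun j : S => fun i => D i (j : Fin L)) := by
  rw [Fintype.linearIndependent_iff]
  intro g hg
  by_contra hne
  push_neg at hne
  obtain ⟨j1, hj1⟩ := hne
  set μ := mutualCoherence D with hμ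
  have hSne : (Finset.univ : Finset S).Nonempty := ⟨j1, Finset.mem_univ _⟩
  obtain ⟨j0, -, hj0max⟩ := Finset.exists_max_image Finset.univ (fun j => |g j|) hSne
  have hj0max : ∀ j : S, |g j| ≤ |g j0| := fun j => hj0max j (Finset.mem_univ j)
  have hg0 : |g j0| > 0 := lt_of_lt_of_le (abs_pos.mpr hj1) (hj0max j1)
  have h0 : ∀ m, ∑ j : S, g j * D m (j : Fin L) = 0 := by
    intro m
    have := congrFun hg m
    simpa using this
  have key : ∑ j : S, g j * ∑ m, D m (j0 : Fin L) * D m (j : Fin L) = 0 := by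
    have hswap : ∑ j : S, g j * ∑ m, D m (j0 : Fin L) * D m (j : Fin L)
        = ∑ m, D m (j0 : Fin L) * ∑ j : S, g j * D m (j : Fin L) := by
      simp_rw [Finset.mul_sum]
      rw [Finset.sum_comm]
      exact Finset.sum_congr rfl fun m _ => Finset.sum_congr rfl fun j _ => by ring
    rw [hswap]
    exact Finset.sum_eq_zero fun m _ => by rw [h0 m, mul_zero]
  have hdiag : ∑ m, D m (j0 : Fin L) * D m (j0 : Fin L) = 1 := by
    have := hcols (j0 : Fin L)
    simpa [sq] using this
  have hsum := Finset.add_sum_erase Finset.univ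
      (fun j : S => g j * ∑ m, D m (j0 : Fin L) * D m (j : Fin L)) (Finset.mem_univ j0)
  rw [key] at hsum
  simp only [hdiag, mul_one] at hsum
  have hsplit : g j0 = - ∑ j ∈ Finset.univ.erase j0,
      g j * ∑ m, D m (j0 : Fin L) * D m (j : Fin L) := by linarith
  have hμ0 : 0 ≤ μ := coherence_nonneg D j0
  have hK1 : 1 ≤ K := by
    rw [← hS]
    exact Finset.card_pos.mpr ⟨(j0 : Fin L), j0.2⟩
  have hbound : |g j0| ≤ ((K : ℝ) - 1) * μ * |g j0| := by
    calc |g j0|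
        = |∑ j ∈ Finset.univ.erase j0, g j * ∑ m, D m (j0 : Fin L) * D m (j : Fin L)| := by
          rw [hsplit, abs_neg]
      _ ≤ ∑ j ∈ Finset.univ.erase j0, |g j * ∑ m, D m (j0 : Fin L) * D m (j : Fin L)| :=
          Finset.abs_sum_le_sum_abs _ _
      _ ≤ ∑ j ∈ Finset.univ.erase j0, |g j0| * μ := by
          apply Finset.sum_le_sum
          intro j hj
          rw [abs_mul]
          have hjne : (j0 : Fin L) ≠ (j : Fin L) := by
            intro h
            exact (Finset.mem_erase.mp hj).1 (Subtype.ext h).symm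
          exact mul_le_mul (hj0max j) (coherence_bound D hjne) (abs_nonneg _) (abs_nonneg _)
      _ = ((K : ℝ) - 1) * μ * |g j0| := by
          rw [Finset.sum_const, nsmul_eq_mul]
          have hcard : (Finset.univ.erase j0).card = K - 1 := by
            rw [Finset.card_erase_of_mem (Finset.mem_univ _)]
            simp [hS]
          rw [hcard, Nat.cast_sub hK1, Nat.cast_one]
          ring
  have hlt : ((K : ℝ) - 1) * μ * |g j0| < 1 * |g j0| := mul_lt_mul_of_pos_right hK hg0
  linarith
end
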